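/- arXiv:1408.2768 — 2 statements merged into one kernel-verified Lean document; each statement's English description precedes it below -/
import Mathlib

section
/- Let θ : ℝ → ℝ be a smooth (C^∞) 2π-periodic function and let h be the periodic Hilbert transform of θ (continuous, 2π-periodic, ĥ(k) = −i·sgn(k)·θ̂(k) for all k ∈ ℤ, where û(k) = (1/2π)∫₀^{2π}u(x)e^{−ikx}dx); assume h is smooth. Then −∫₀^{2π} h(x)·θ′(x)·h′(x) dx = (1/2)∫₀^{2π} θ(x)·( h′(x)² − θ′(x)² ) dx. -/
open MeasureTheory

/-- The `k`-th Fourier coefficient of a `2π`-periodic function `u : ℝ → ℝ`: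
`û(k) = (1/2π) ∫₀^{2π} u(x) e^{−ikx} dx`. -/
noncomputable def fourierCoef (u : ℝ → ℝ) (k : ℤ) : ℂ :=
  (1 / (2 * Real.pi) : ℝ) *
    ∫ x in (0:ℝ)..(2 * Real.pi), (u x : ℂ) * Complex.exp (-Complex.I * k * x)

/-- `v` is the periodic Hilbert transform of `u`: `v` is continuous, `2π`-periodic, and
`v̂(k) = −i·sgn(k)·û(k)` for all `k ∈ ℤ`. -/
def IsHilbertTransformOf (v u : ℝ → ℝ) : Prop :=
  Continuous v ∧ Function.Periodic v (2 * Real.pi) ∧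
    ∀ k : ℤ, fourierCoef v k = -Complex.I * (Int.sign k : ℂ) * fourierCoef u k

open scoped ContDiff

noncomputable def cCoef (f : ℝ → ℂ) (k : ℤ) : ℂ :=
  (1 / (2 * Real.pi) : ℝ) *
    ∫ x in (0:ℝ)..(2 * Real.pi), f x * Complex.exp (-Complex.I * k * x)

lemma twoPi_pos : (0:ℝ) < 2 * Real.pi := by positivity

lemma periodic_deriv' {f : ℝ → ℂ} (hf : Function.Periodic f (2 * Real.pi)) :
    Function.Periodic (deriv f) (2 * Real.pi) := by
  intro x
  have : (fun y : ℝ => f (y + 2 * Real.pi)) = f := funext fun y => hf y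
  calc deriv f (x + 2 * Real.pi) = deriv (fun y => f (y + 2 * Real.pi)) x := by
        rw [deriv_comp_add_const]
    _ = deriv f x := by rw [this]

lemma cCoef_eq_fourierCoeff {f : ℝ → ℂ} (hp : Function.Periodic f (2 * Real.pi)) (k : ℤ) :
    haveI : Fact (0 < 2 * Real.pi) := ⟨twoPi_pos⟩
    cCoef f k = fourierCoeff hp.lift k := by
  haveI : Fact (0 < 2 * Real.pi) := ⟨twoPi_pos⟩
  rw [fourierCoeff_eq_intervalIntegral hp.lift k 0, zero_add, cCoef, Complex.real_smul]
  have h1 : ((1 / (2 * Real.pi) : ℝ) : ℂ) = (1 / (2 * Real.pi) : ℂ) := by push_cast; ring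
  rw [h1]
  congr 1
  apply intervalIntegral.integral_congr
  intro x hx
  simp only []
  rw [fourier_coe_apply, Function.Periodic.lift_coe, smul_eq_mul, mul_comm]
  congr 2
  have hπ : (Real.pi : ℂ) ≠ 0 := by exact_mod_cast Real.pi_ne_zero
  push_cast
  field_simp

lemma cCoef_deriv {f : ℝ → ℂ} (hf : ContDiff ℝ ∞ f)
    (hp : Function.Periodic f (2 * Real.pi)) (k : ℤ) :
    cCoef (deriv f) k = Complex.I * k * cCoef f k := by
  have hdf : Differentiable ℝ f := hf.differentiable (by simp)
  have hdc : Continuous (deriv f) := hf.continuous_deriv (by exact_mod_cast le_top)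
  have hec : Continuous fun x : ℝ => Complex.exp (-Complex.I * k * x) := by
    fun_prop
  have hvd : ∀ x : ℝ, HasDerivAt (fun y : ℝ => Complex.exp (-Complex.I * k * y))
      (-Complex.I * k * Complex.exp (-Complex.I * k * x)) x := by
    intro x
    have h1 : HasDerivAt (fun y : ℝ => -Complex.I * k * y) (-Complex.I * k) x := by
      simpa using ((hasDerivAt_id (x : ℂ)).const_mul (-Complex.I * (k:ℂ))).comp_ofReal
    simpa [mul_comm] using h1.cexp
  have key : (∫ x in (0:ℝ)..(2 * Real.pi),
      (deriv f x * Complex.exp (-Complex.I * k * x) +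
        f x * (-Complex.I * k * Complex.exp (-Complex.I * k * x)))) =
      f (2 * Real.pi) * Complex.exp (-Complex.I * k * ((2 * Real.pi : ℝ) : ℂ)) -
        f 0 * Complex.exp (-Complex.I * k * ((0:ℝ) : ℂ)) := by
    apply intervalIntegral.integral_deriv_mul_eq_sub_of_hasDerivAt
    · exact hdf.continuous.continuousOn
    · exact hec.continuousOn
    · intro x _; exact (hdf x).hasDerivAt
    · intro x _; exact hvd x
    · exact hdc.intervalIntegrable (μ := volume) _ _
    · exact (continuous_const.mul hec).intervalIntegrable (μ := volume) _ _
  have hexp2pi : Complex.exp (-Complex.I * k * ((2 * Real.pi : ℝ) : ℂ)) = 1 := by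
    have := Complex.exp_int_mul_two_pi_mul_I (-k)
    rw [← this]
    congr 1
    push_cast
    ring
  have hf2pi : f (2 * Real.pi) = f 0 := by
    have := hp 0
    simpa using this
  rw [hexp2pi, hf2pi] at key
  simp only [Complex.ofReal_zero, mul_zero, Complex.exp_zero, mul_one] at key
  have hint1 : IntervalIntegrable (fun x : ℝ => deriv f x * Complex.exp (-Complex.I * k * x))
      volume 0 (2 * Real.pi) := (hdc.mul hec).intervalIntegrable (μ := volume) _ _
  have hint2 : IntervalIntegrable
      (fun x : ℝ => f x * (-Complex.I * k * Complex.exp (-Complex.I * k * x)))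
      volume 0 (2 * Real.pi) :=
    (hdf.continuous.mul (continuous_const.mul hec)).intervalIntegrable (μ := volume) _ _
  rw [intervalIntegral.integral_add hint1 hint2] at key
  have h2 : (∫ x in (0:ℝ)..(2 * Real.pi), f x * (-Complex.I * k * Complex.exp (-Complex.I * k * x)))
      = -Complex.I * k * ∫ x in (0:ℝ)..(2 * Real.pi), f x * Complex.exp (-Complex.I * k * x) := by
    rw [← intervalIntegral.integral_const_mul]
    apply intervalIntegral.integral_congr
    intro x _
    ring
  rw [h2] at key
  have h3 : (∫ x in (0:ℝ)..(2 * Real.pi), deriv f x * Complex.exp (-Complex.I * k * x))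
      = Complex.I * k * ∫ x in (0:ℝ)..(2 * Real.pi), f x * Complex.exp (-Complex.I * k * x) := by
    linear_combination key
  rw [cCoef, cCoef, h3]
  ring

lemma cCoef_norm_le {f : ℝ → ℂ} (hf : Continuous f) (k : ℤ) :
    ‖cCoef f k‖ ≤ (1 / (2 * Real.pi)) * ∫ x in (0:ℝ)..(2 * Real.pi), ‖f x‖ := by
  rw [cCoef]
  rw [norm_mul]
  have h0 : (0:ℝ) ≤ 2 * Real.pi := by positivity
  have h1 : ‖((1 / (2 * Real.pi) : ℝ) : ℂ)‖ = 1 / (2 * Real.pi) := by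
    rw [Complex.norm_real, Real.norm_eq_abs, abs_of_pos (by positivity)]
  rw [h1]
  apply mul_le_mul_of_nonneg_left _ (by positivity)
  calc ‖∫ x in (0:ℝ)..(2 * Real.pi), f x * Complex.exp (-Complex.I * k * x)‖
      ≤ ∫ x in (0:ℝ)..(2 * Real.pi), ‖f x * Complex.exp (-Complex.I * k * x)‖ :=
        intervalIntegral.norm_integral_le_integral_norm h0
    _ = ∫ x in (0:ℝ)..(2 * Real.pi), ‖f x‖ := by
        apply intervalIntegral.integral_congr
        intro x _
        simp only []
        rw [norm_mul]
        have : ‖Complex.exp (-Complex.I * k * x)‖ = 1 := by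
          rw [show -Complex.I * k * x = ((-(k * x) : ℝ) : ℂ) * Complex.I by push_cast; ring]
          exact Complex.norm_exp_ofReal_mul_I _
        rw [this, mul_one]

lemma summable_norm_cCoef {f : ℝ → ℂ} (hf : ContDiff ℝ ∞ f)
    (hp : Function.Periodic f (2 * Real.pi)) :
    Summable (fun k => ‖cCoef f k‖) := by
  have hdf : Differentiable ℝ f := hf.differentiable (by simp)
  have hf1 : ContDiff ℝ ∞ (deriv f) := (contDiff_infty_iff_deriv.mp hf).2
  have hf2c : Continuous (deriv (deriv f)) := hf1.continuous_deriv (by exact_mod_cast le_top)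
  have hp1 := periodic_deriv' hp
  set C : ℝ := (1 / (2 * Real.pi)) * ∫ x in (0:ℝ)..(2 * Real.pi), ‖deriv (deriv f) x‖ with hC
  apply Summable.of_norm_bounded_eventually (g := fun k : ℤ => C * (1 / (k:ℝ) ^ 2))
  · exact (Real.summable_one_div_int_pow.mpr (by norm_num)).mul_left C
  · rw [Filter.eventually_cofinite]
    apply Set.Finite.subset (Set.finite_singleton (0 : ℤ))
    intro k hk
    simp only [Set.mem_setOf_eq, norm_norm] at hk
    by_contra hk0
    apply hk
    have hkne : (k : ℝ) ≠ 0 := by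
      simp only [Set.mem_singleton_iff] at hk0
      exact_mod_cast hk0
    have e1 : cCoef (deriv (deriv f)) k = Complex.I * k * (Complex.I * k * cCoef f k) := by
      rw [cCoef_deriv hf1 hp1 k, cCoef_deriv hf hp k]
    have e2 : ‖cCoef (deriv (deriv f)) k‖ = (k:ℝ)^2 * ‖cCoef f k‖ := by
      rw [e1]
      rw [show Complex.I * k * (Complex.I * k * cCoef f k)
        = (Complex.I * k)^2 * cCoef f k by ring]
      rw [norm_mul, norm_pow, norm_mul, Complex.norm_I, one_mul]
      congr 1
      rw [show ((k:ℂ)) = ((k:ℝ):ℂ) by push_cast; ring, Complex.norm_real, Real.norm_eq_abs,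
        sq_abs]
    have e3 : ‖cCoef (deriv (deriv f)) k‖ ≤ C := cCoef_norm_le hf2c k
    have hk2 : (0:ℝ) < (k:ℝ)^2 := by positivity
    have hle : ‖cCoef f k‖ = ‖cCoef (deriv (deriv f)) k‖ / (k:ℝ)^2 := by
      rw [e2]; field_simp
    rw [hle]
    have h4 : C * (1 / (k:ℝ)^2) = C / (k:ℝ)^2 := by ring
    rw [h4]
    exact (div_le_div_iff_of_pos_right hk2).mpr e3

lemma summable_cCoef {f : ℝ → ℂ} (hf : ContDiff ℝ ∞ f)
    (hp : Function.Periodic f (2 * Real.pi)) :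
    Summable (fun k => cCoef f k) :=
  (summable_norm_cCoef hf hp).of_norm

lemma hasSum_cCoef {f : ℝ → ℂ} (hc : Continuous f) (hp : Function.Periodic f (2 * Real.pi))
    (hs : Summable (fun k => cCoef f k)) (x : ℝ) :
    HasSum (fun k : ℤ => cCoef f k * Complex.exp (Complex.I * k * x)) (f x) := by
  haveI : Fact (0 < 2 * Real.pi) := ⟨twoPi_pos⟩
  set F : C(AddCircle (2 * Real.pi), ℂ) :=
    ⟨hp.lift, continuous_coinduced_dom.mpr hc⟩ with hF
  have hcoef : ∀ k : ℤ, fourierCoeff (⇑F) k = cCoef f k := by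
    intro k
    exact (cCoef_eq_fourierCoeff hp k).symm
  have hsum : Summable (fourierCoeff (⇑F)) := by
    apply hs.congr
    intro k; rw [hcoef k]
  have h2 := has_pointwise_sum_fourier_series_of_summable (f := F) hsum (x : ℝ)
  have h3 : F ((x : ℝ) : AddCircle (2 * Real.pi)) = f x := Function.Periodic.lift_coe hp x
  rw [h3] at h2
  apply h2.congr_fun
  intro k
  rw [hcoef k, smul_eq_mul]
  congr 1
  rw [fourier_coe_apply]
  congr 1
  have hπ : (Real.pi : ℂ) ≠ 0 := by exact_mod_cast Real.pi_ne_zero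
  push_cast
  field_simp

lemma cCoef_mul_vanish {p q : ℝ → ℂ} (hpc : Continuous p)
    (hpp : Function.Periodic p (2 * Real.pi))
    (hqs : ContDiff ℝ ∞ q) (hqp : Function.Periodic q (2 * Real.pi))
    (hp0 : ∀ k : ℤ, k < 0 → cCoef p k = 0) (hq0 : ∀ k : ℤ, k ≤ 0 → cCoef q k = 0)
    (k : ℤ) (hk : k ≤ 0) : cCoef (fun x => p x * q x) k = 0 := by
  have hqc : Continuous q := hqs.continuous
  have hsn : Summable (fun m => ‖cCoef q m‖) := summable_norm_cCoef hqs hqp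
  have hs : Summable (fun m => cCoef q m) := hsn.of_norm
  set G : ℤ → ℝ → ℂ := fun m x => (cCoef q m * Complex.exp (Complex.I * m * x)) *
      (p x * Complex.exp (-Complex.I * k * x)) with hG
  have hpt : ∀ x : ℝ, p x * q x * Complex.exp (-Complex.I * k * x) = ∑' m, G m x := by
    intro x
    have h1 := (hasSum_cCoef hqc hqp hs x).tsum_eq
    calc p x * q x * Complex.exp (-Complex.I * k * x)
        = q x * (p x * Complex.exp (-Complex.I * k * x)) := by ring
      _ = (∑' m : ℤ, cCoef q m * Complex.exp (Complex.I * m * x)) *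
            (p x * Complex.exp (-Complex.I * k * x)) := by rw [h1]
      _ = ∑' m, G m x := by rw [tsum_mul_right]
  have hint : ∀ m : ℤ, Integrable (G m) (volume.restrict (Set.Ioc (0:ℝ) (2 * Real.pi))) := by
    intro m
    apply Continuous.integrableOn_Ioc
    fun_prop
  have hnormG : ∀ (m : ℤ) (x : ℝ), ‖G m x‖ = ‖cCoef q m‖ * ‖p x‖ := by
    intro m x
    have e1 : ‖Complex.exp (Complex.I * m * x)‖ = 1 := by
      rw [show Complex.I * m * x = (((m * x : ℝ)) : ℂ) * Complex.I by push_cast; ring]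
      exact Complex.norm_exp_ofReal_mul_I _
    have e2 : ‖Complex.exp (-Complex.I * k * x)‖ = 1 := by
      rw [show -Complex.I * k * x = (((-(k * x) : ℝ)) : ℂ) * Complex.I by push_cast; ring]
      exact Complex.norm_exp_ofReal_mul_I _
    simp only [hG, norm_mul, e1, e2, mul_one]
  have hsumint : Summable (fun m : ℤ => ∫ x in Set.Ioc (0:ℝ) (2 * Real.pi), ‖G m x‖) := by
    apply Summable.congr (hsn.mul_right (∫ x in Set.Ioc (0:ℝ) (2 * Real.pi), ‖p x‖))
    intro m
    rw [← integral_const_mul]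
    apply integral_congr_ae
    filter_upwards with x
    exact (hnormG m x).symm
  have hswap := integral_tsum_of_summable_integral_norm hint hsumint
  have hzero : ∀ m : ℤ, (∫ x in Set.Ioc (0:ℝ) (2 * Real.pi), G m x) = 0 := by
    intro m
    rcases le_or_gt m 0 with hm | hm
    · have : cCoef q m = 0 := hq0 m hm
      simp only [hG, this, zero_mul]
      simp
    · have hkm : k - m < 0 := by omega
      have hcp : cCoef p (k - m) = 0 := hp0 _ hkm
      have h2 : (∫ x in (0:ℝ)..(2 * Real.pi),
          p x * Complex.exp (-Complex.I * (k - m : ℤ) * x)) = 0 := by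
        rw [cCoef] at hcp
        have h2pi : ((1 / (2 * Real.pi) : ℝ) : ℂ) ≠ 0 := by
          simp [Real.pi_ne_zero]
        exact (mul_eq_zero.mp hcp).resolve_left h2pi
      have h3 : (∫ x in Set.Ioc (0:ℝ) (2 * Real.pi),
          p x * Complex.exp (-Complex.I * (k - m : ℤ) * x)) = 0 := by
        rw [← intervalIntegral.integral_of_le twoPi_pos.le]
        exact h2
      calc (∫ x in Set.Ioc (0:ℝ) (2 * Real.pi), G m x)
          = ∫ x in Set.Ioc (0:ℝ) (2 * Real.pi),
              cCoef q m * (p x * Complex.exp (-Complex.I * (k - m : ℤ) * x)) := by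
            apply integral_congr_ae
            filter_upwards with x
            have hme : Complex.exp (Complex.I * m * x) * Complex.exp (-Complex.I * k * x)
                = Complex.exp (-Complex.I * ((k - m : ℤ) : ℂ) * x) := by
              rw [← Complex.exp_add]; congr 1; push_cast; ring
            simp only [hG]
            rw [← hme]
            ring
        _ = cCoef q m * ∫ x in Set.Ioc (0:ℝ) (2 * Real.pi),
              p x * Complex.exp (-Complex.I * (k - m : ℤ) * x) := integral_const_mul _ _
        _ = 0 := by rw [h3, mul_zero]
  rw [cCoef]
  have h4 : (∫ x in (0:ℝ)..(2 * Real.pi), (p x * q x) * Complex.exp (-Complex.I * k * x)) = 0 := by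
    rw [intervalIntegral.integral_of_le twoPi_pos.le]
    have h5 : (∫ x in Set.Ioc (0:ℝ) (2 * Real.pi), p x * q x * Complex.exp (-Complex.I * k * x))
        = ∫ x in Set.Ioc (0:ℝ) (2 * Real.pi), ∑' m, G m x := by
      apply integral_congr_ae
      filter_upwards with x
      exact hpt x
    rw [h5, ← hswap]
    rw [tsum_congr hzero]
    simp
  rw [h4, mul_zero]

/-- The identity `−∫ (ℋθ) θ_x Λθ dx = (1/2) ∫ θ ((Λθ)² − θ_x²) dx` on the circle,
where `Λθ = (ℋθ)′`. -/
theorem hilbert_H_half_identity (θ h : ℝ → ℝ)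
    (hθ : ContDiff ℝ (⊤ : ℕ∞) θ) (hθp : Function.Periodic θ (2 * Real.pi))
    (hh : IsHilbertTransformOf h θ) (hhs : ContDiff ℝ (⊤ : ℕ∞) h) :
    -∫ x in (0:ℝ)..(2 * Real.pi), h x * deriv θ x * deriv h x =
      (1 / 2) * ∫ x in (0:ℝ)..(2 * Real.pi),
        θ x * ((deriv h x) ^ 2 - (deriv θ x) ^ 2) := by
  obtain ⟨hhc, hhp, hcoefs⟩ := hh
  have hθ' : ContDiff ℝ ∞ θ := hθ.of_le (by simp)
  have hh' : ContDiff ℝ ∞ h := hhs.of_le (by simp)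
  have hθc : Continuous θ := hθ'.continuous
  have hθd : Differentiable ℝ θ := hθ'.differentiable (by simp)
  have hhd : Differentiable ℝ h := hh'.differentiable (by simp)
  have hθ'c : Continuous (deriv θ) := hθ'.continuous_deriv (by exact_mod_cast le_top)
  have hh'c : Continuous (deriv h) := hh'.continuous_deriv (by exact_mod_cast le_top)
  set F : ℝ → ℂ := fun x => (θ x : ℂ) + Complex.I * (h x : ℂ) with hFdef
  set G : ℝ → ℂ := fun x => Complex.ofReal (deriv θ x) + Complex.I * Complex.ofReal (deriv h x) with hGdef
  have hFs : ContDiff ℝ ∞ F :=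
    (Complex.ofRealCLM.contDiff.comp hθ').add
      (contDiff_const.mul (Complex.ofRealCLM.contDiff.comp hh'))
  have hFc : Continuous F := hFs.continuous
  have hFD : ∀ x, HasDerivAt F (G x) x := by
    intro x
    exact ((hθd x).hasDerivAt.ofReal_comp).add (((hhd x).hasDerivAt.ofReal_comp).const_mul
      Complex.I)
  have hderivF : deriv F = G := funext fun x => (hFD x).deriv
  have hFp : Function.Periodic F (2 * Real.pi) := by
    intro x; simp only [hFdef, hθp x, hhp x]
  have hGp : Function.Periodic G (2 * Real.pi) := by
    rw [← hderivF]; exact periodic_deriv' hFp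
  have hGs : ContDiff ℝ ∞ G := hderivF ▸ (contDiff_infty_iff_deriv.mp hFs).2
  have hGc : Continuous G := hGs.continuous
  -- splitting of coefficients
  have hsplit : ∀ (u v : ℝ → ℝ), Continuous u → Continuous v → ∀ k : ℤ,
      cCoef (fun x => (u x : ℂ) + Complex.I * (v x : ℂ)) k
        = fourierCoef u k + Complex.I * fourierCoef v k := by
    intro u v hu hv k
    have hec : Continuous fun x : ℝ => Complex.exp (-Complex.I * k * x) := by fun_prop
    have i1 : IntervalIntegrable (fun x : ℝ => (u x : ℂ) * Complex.exp (-Complex.I * k * x))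
        volume 0 (2 * Real.pi) :=
      ((Complex.continuous_ofReal.comp hu).mul hec).intervalIntegrable (μ := volume) _ _
    have i2 : IntervalIntegrable
        (fun x : ℝ => Complex.I * ((v x : ℂ) * Complex.exp (-Complex.I * k * x)))
        volume 0 (2 * Real.pi) :=
      (continuous_const.mul ((Complex.continuous_ofReal.comp hv).mul hec)).intervalIntegrable
        (μ := volume) _ _
    rw [cCoef, fourierCoef, fourierCoef]
    have e1 : (fun x : ℝ => ((u x : ℂ) + Complex.I * (v x : ℂ))
          * Complex.exp (-Complex.I * k * x))
        = fun x : ℝ => (u x : ℂ) * Complex.exp (-Complex.I * k * x)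
          + Complex.I * ((v x : ℂ) * Complex.exp (-Complex.I * k * x)) :=
      funext fun x => by ring
    rw [e1, intervalIntegral.integral_add i1 i2, intervalIntegral.integral_const_mul]
    ring
  have hF0 : ∀ k : ℤ, k < 0 → cCoef F k = 0 := by
    intro k hk
    rw [hFdef, hsplit θ h hθc hhc k, hcoefs k,
      show Int.sign k = -1 from Int.sign_eq_neg_one_iff_neg.mpr hk]
    push_cast
    linear_combination (fourierCoef θ k) * Complex.I_sq
  have hG0 : ∀ k : ℤ, k ≤ 0 → cCoef G k = 0 := by
    intro k hk
    rw [← hderivF, cCoef_deriv hFs hFp k]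
    rcases eq_or_lt_of_le hk with rfl | hk'
    · simp
    · rw [hF0 k hk', mul_zero]
  have hFG0 : ∀ k : ℤ, k ≤ 0 → cCoef (fun x => F x * G x) k = 0 :=
    fun k hk => cCoef_mul_vanish hFc hFp hGs hGp hF0 hG0 k hk
  have key : cCoef (fun x => (F x * G x) * G x) 0 = 0 :=
    cCoef_mul_vanish (hFc.mul hGc) (fun x => by
      show F (x + 2 * Real.pi) * G (x + 2 * Real.pi) = F x * G x; rw [hFp x, hGp x]) hGs hGp
      (fun k hk => hFG0 k hk.le) hG0 0 le_rfl
  -- extract that the integral of F·G·G vanishes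
  have hint0 : (∫ x in (0:ℝ)..(2 * Real.pi), F x * G x * G x) = 0 := by
    rw [cCoef] at key
    simp only [Int.cast_zero, mul_zero, zero_mul, Complex.exp_zero, mul_one] at key
    have h2pi : ((1 / (2 * Real.pi) : ℝ) : ℂ) ≠ 0 := by simp [Real.pi_ne_zero]
    exact (mul_eq_zero.mp key).resolve_left h2pi
  -- take real parts
  have hFGGc : Continuous fun x => F x * G x * G x := (hFc.mul hGc).mul hGc
  have hre : (∫ x in (0:ℝ)..(2 * Real.pi),
      (θ x * ((deriv θ x)^2 - (deriv h x)^2) - 2 * (h x * deriv θ x * deriv h x))) = 0 := by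
    have h1 : ∀ x : ℝ, (F x * G x * G x).re
        = θ x * ((deriv θ x)^2 - (deriv h x)^2) - 2 * (h x * deriv θ x * deriv h x) := by
      intro x
      simp only [hFdef, hGdef, Complex.mul_re, Complex.mul_im, Complex.add_re, Complex.add_im,
        Complex.ofReal_re, Complex.ofReal_im, Complex.mul_re, Complex.I_re, Complex.I_im]
      ring
    have h2 : (∫ x in (0:ℝ)..(2 * Real.pi), F x * G x * G x).re
        = ∫ x in (0:ℝ)..(2 * Real.pi), (F x * G x * G x).re :=
      (Complex.reCLM.intervalIntegral_comp_comm (hFGGc.intervalIntegrable _ _)).symm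
    calc (∫ x in (0:ℝ)..(2 * Real.pi),
          (θ x * ((deriv θ x)^2 - (deriv h x)^2) - 2 * (h x * deriv θ x * deriv h x)))
        = ∫ x in (0:ℝ)..(2 * Real.pi), (F x * G x * G x).re := by
          apply intervalIntegral.integral_congr
          intro x _
          exact (h1 x).symm
      _ = (∫ x in (0:ℝ)..(2 * Real.pi), F x * G x * G x).re := h2.symm
      _ = 0 := by rw [hint0]; rfl
  -- final rearrangement
  have hi1 : IntervalIntegrable (fun x => θ x * ((deriv θ x)^2 - (deriv h x)^2))
      volume 0 (2 * Real.pi) :=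
    (hθc.mul ((hθ'c.pow 2).sub (hh'c.pow 2))).intervalIntegrable _ _
  have hi2 : IntervalIntegrable (fun x => 2 * (h x * deriv θ x * deriv h x))
      volume 0 (2 * Real.pi) :=
    (continuous_const.mul ((hhc.mul hθ'c).mul hh'c)).intervalIntegrable _ _
  rw [intervalIntegral.integral_sub hi1 hi2, intervalIntegral.integral_const_mul] at hre
  have hneg : (∫ x in (0:ℝ)..(2 * Real.pi), θ x * ((deriv θ x)^2 - (deriv h x)^2))
      = -∫ x in (0:ℝ)..(2 * Real.pi), θ x * ((deriv h x)^2 - (deriv θ x)^2) := by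
    rw [← intervalIntegral.integral_neg]
    apply intervalIntegral.integral_congr
    intro x _
    ring
  rw [hneg] at hre
  linarith
end

section
/- Let T > 0 and let θ : ℝ × ℝ → ℝ be a smooth (C^∞) function, 2π-periodic in the second (space) variable, with θ(t,x) > 0 for all (t,x). For each t let h(t,·) be the periodic Hilbert transform of θ(t,·) (i.e., ĥ(t,k) = −i·sgn(k)·θ̂(t,k) for all k ∈ ℤ, where û(k) = (1/2π)∫₀^{2π}u(x)e^{−ikx}dx), and assume h is smooth. Suppose ∂_t θ(t,x) + ∂_x( θ(t,x) h(t,x) ) = 0 for all (t,x). Then the function E(t) = ∫₀^{2π} θ(t,x) log θ(t,x) dx is differentiable and E′(t) = −2π ∑_{k∈ℤ} |k| |θ̂(t,k)|² ≤ 0 for every t ∈ [0,T]. -/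
open MeasureTheory

namespace EntropyAux

open Complex intervalIntegral Filter

instance : Fact (0 < 2 * Real.pi) := ⟨by positivity⟩

lemma sign_mul_self (k : ℤ) : k.sign * k = |k| := by
  rcases lt_trichotomy k 0 with hk | hk | hk
  · rw [Int.sign_eq_neg_one_of_neg hk, abs_of_neg hk]; ring
  · simp [hk]
  · rw [Int.sign_eq_one_of_pos hk, abs_of_pos hk]; ring

lemma lift_continuous {f : ℝ → ℂ} (hf : Continuous f)
    (hp : Function.Periodic f (2 * Real.pi)) : Continuous hp.lift :=
  continuous_coinduced_dom.mpr hf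

lemma fourierCoeff_lift_real (u : ℝ → ℝ)
    (hp : Function.Periodic (fun x => (u x : ℂ)) (2 * Real.pi)) (k : ℤ) :
    fourierCoeff hp.lift k = fourierCoef u k := by
  rw [fourierCoeff_eq_intervalIntegral _ k 0, zero_add, fourierCoef]
  rw [Complex.real_smul]
  congr 1
  refine intervalIntegral.integral_congr fun x hx => ?_
  rw [Function.Periodic.lift_coe, fourier_coe_apply, smul_eq_mul, mul_comm]
  have hpi : ((2 * Real.pi : ℝ) : ℂ) ≠ 0 :=
    Complex.ofReal_ne_zero.mpr (by positivity : (2 * Real.pi : ℝ) ≠ 0)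
  refine congrArg (fun z => (u x : ℂ) * Complex.exp z) ?_
  rw [div_eq_iff hpi]
  push_cast
  ring

lemma integral_haar (F : AddCircle (2 * Real.pi) → ℂ) :
    ∫ z, F z ∂AddCircle.haarAddCircle
      = ((1 / (2 * Real.pi) : ℝ) : ℂ) * ∫ x in (0:ℝ)..(2 * Real.pi), F x := by
  have h := fourierCoeff_eq_intervalIntegral F 0 0
  simp only [neg_zero, fourierCoeff, fourier_zero, one_smul, zero_add] at h
  rw [h, Complex.real_smul]

lemma parseval (F G : C(AddCircle (2 * Real.pi), ℂ)) :
    ∑' k : ℤ, (starRingEnd ℂ) (fourierCoeff (⇑F) k) * fourierCoeff (⇑G) k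
      = ∫ z, (starRingEnd ℂ) (F z) * G z ∂AddCircle.haarAddCircle := by
  set μ := (AddCircle.haarAddCircle : Measure (AddCircle (2 * Real.pi)))
  set Fl : Lp ℂ 2 μ := ContinuousMap.toLp 2 μ ℂ F with hFl
  set Gl : Lp ℂ 2 μ := ContinuousMap.toLp 2 μ ℂ G with hGl
  have hFc : ∀ k, fourierCoeff (⇑F) k = fourierCoeff (⇑Fl) k := by
    intro k
    refine integral_congr_ae ?_
    filter_upwards [ContinuousMap.coeFn_toLp (p := 2) (𝕜 := ℂ) μ F] with z hz
    rw [hz]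
  have hGc : ∀ k, fourierCoeff (⇑G) k = fourierCoeff (⇑Gl) k := by
    intro k
    refine integral_congr_ae ?_
    filter_upwards [ContinuousMap.coeFn_toLp (p := 2) (𝕜 := ℂ) μ G] with z hz
    rw [hz]
  have hrepr : ∀ (f : Lp ℂ 2 μ) (k : ℤ),
      inner (𝕜 := ℂ) (fourierBasis (T := 2 * Real.pi) k) f = fourierCoeff (⇑f) k := by
    intro f k
    rw [← fourierBasis_repr]
    exact (HilbertBasis.repr_apply_apply fourierBasis f k).symm
  have key := HilbertBasis.tsum_inner_mul_inner (fourierBasis (T := 2 * Real.pi)) Fl Gl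
  have hinner : (inner ℂ Fl Gl : ℂ) = ∫ z, (starRingEnd ℂ) (F z) * G z ∂μ := by
    rw [MeasureTheory.L2.inner_def]
    refine integral_congr_ae ?_
    filter_upwards [ContinuousMap.coeFn_toLp (p := 2) (𝕜 := ℂ) μ F,
      ContinuousMap.coeFn_toLp (p := 2) (𝕜 := ℂ) μ G] with z h1 h2
    rw [RCLike.inner_apply, h1, h2, mul_comm]
  rw [← hinner, ← key]
  refine tsum_congr fun k => ?_
  rw [hFc, hGc, ← hrepr Fl k, ← hrepr Gl k, ← inner_conj_symm Fl]

lemma fourierCoef_deriv (u u' : ℝ → ℝ) (hu : ∀ x, HasDerivAt u (u' x) x)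
    (hc' : Continuous u') (hp : Function.Periodic u (2 * Real.pi)) (k : ℤ) :
    fourierCoef u' k = Complex.I * k * fourierCoef u k := by
  have hcu : Continuous u :=
    continuous_iff_continuousAt.mpr fun x => (hu x).differentiableAt.continuousAt
  set e : ℝ → ℂ := fun x => Complex.exp (-Complex.I * k * x) with he
  have hce : Continuous e := by fun_prop
  have hde : ∀ x : ℝ, HasDerivAt e (-Complex.I * k * e x) x := by
    intro x
    have h1 : HasDerivAt (fun y : ℝ => -Complex.I * k * (y : ℂ)) (-Complex.I * k) x := by
      simpa using (Complex.ofRealCLM.hasDerivAt (x := x)).const_mul (-Complex.I * (k : ℂ))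
    simpa [he, mul_comm] using h1.cexp
  have hA : ∀ x : ℝ, HasDerivAt (fun y => (u y : ℂ) * e y)
      ((u' x : ℂ) * e x + (u x : ℂ) * (-Complex.I * k * e x)) x :=
    fun x => ((hu x).ofReal_comp).mul (hde x)
  have hint : (∫ x in (0:ℝ)..(2 * Real.pi),
        ((u' x : ℂ) * e x + (u x : ℂ) * (-Complex.I * k * e x)))
      = (u (2 * Real.pi) : ℂ) * e (2 * Real.pi) - (u 0 : ℂ) * e 0 := by
    refine intervalIntegral.integral_eq_sub_of_hasDerivAt (fun x _ => hA x) ?_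
    apply Continuous.intervalIntegrable
    fun_prop
  have hend : (u (2 * Real.pi) : ℂ) * e (2 * Real.pi) = (u 0 : ℂ) * e 0 := by
    have h2 : u (2 * Real.pi) = u 0 := by simpa using hp 0
    have h3 : e (2 * Real.pi) = 1 := by
      have harg : (-Complex.I * k * ((2 * Real.pi : ℝ) : ℂ))
          = ((-k : ℤ) : ℂ) * (2 * (Real.pi : ℂ) * Complex.I) := by push_cast; ring
      rw [he]
      show Complex.exp _ = 1
      rw [harg]
      exact Complex.exp_int_mul_two_pi_mul_I (-k)
    have h4 : e 0 = 1 := by simp [he]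
    rw [h2, h3, h4]
  have hsplit : (∫ x in (0:ℝ)..(2 * Real.pi),
        ((u' x : ℂ) * e x + (u x : ℂ) * (-Complex.I * k * e x)))
      = (∫ x in (0:ℝ)..(2 * Real.pi), (u' x : ℂ) * e x)
        + (-Complex.I * k) * ∫ x in (0:ℝ)..(2 * Real.pi), (u x : ℂ) * e x := by
    rw [intervalIntegral.integral_add]
    · congr 1
      rw [← intervalIntegral.integral_const_mul]
      refine intervalIntegral.integral_congr fun x hx => ?_
      ring
    · exact Continuous.intervalIntegrable (by fun_prop) _ _
    · exact Continuous.intervalIntegrable (by fun_prop) _ _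
  have hmain : (∫ x in (0:ℝ)..(2 * Real.pi), (u' x : ℂ) * e x)
      = Complex.I * k * ∫ x in (0:ℝ)..(2 * Real.pi), (u x : ℂ) * e x := by
    have := hint
    rw [hsplit, hend, sub_self] at this
    have h5 := eq_neg_of_add_eq_zero_left this
    rw [h5]; ring
  rw [fourierCoef, fourierCoef, hmain]
  ring

end EntropyAux

open EntropyAux in
/-- Entropy dissipation for smooth positive solutions of `θ_t + (θ ℋθ)_x = 0`:
`E(t) = ∫₀^{2π} θ log θ dx` is differentiable with
`E′(t) = −2π ∑_{k} |k| |θ̂(t,k)|² ≤ 0` on `[0,T]`. -/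
theorem entropy_dissipation_1d_qg (T : ℝ) (hT : 0 < T)
    (θ h : ℝ × ℝ → ℝ)
    (hθ : ContDiff ℝ (⊤ : ℕ∞) θ) (hh : ContDiff ℝ (⊤ : ℕ∞) h)
    (hθper : ∀ t x : ℝ, θ (t, x + 2 * Real.pi) = θ (t, x))
    (hθpos : ∀ p : ℝ × ℝ, 0 < θ p)
    (hhilb : ∀ t : ℝ, IsHilbertTransformOf (fun x => h (t, x)) (fun x => θ (t, x)))
    (hpde : ∀ t x : ℝ,
      deriv (fun s => θ (s, x)) t + deriv (fun y => θ (t, y) * h (t, y)) x = 0) :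
    ∀ t ∈ Set.Icc (0:ℝ) T,
      HasDerivAt (fun s => ∫ x in (0:ℝ)..(2 * Real.pi), θ (s, x) * Real.log (θ (s, x)))
        (-(2 * Real.pi) * ∑' k : ℤ, (|k| : ℝ) * ‖fourierCoef (fun x => θ (t, x)) k‖ ^ 2) t ∧
      -(2 * Real.pi) * ∑' k : ℤ, (|k| : ℝ) * ‖fourierCoef (fun x => θ (t, x)) k‖ ^ 2 ≤ 0 := by
  intro t ht
  clear ht hT
  have hπ : (0:ℝ) < 2 * Real.pi := by positivity
  -- partial derivative functions
  set Dt : ℝ × ℝ → ℝ := fun p => fderiv ℝ θ p (1, 0) with hDt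
  set Dx : ℝ × ℝ → ℝ := fun p => fderiv ℝ θ p (0, 1) with hDx
  set Dxh : ℝ × ℝ → ℝ := fun p => fderiv ℝ h p (0, 1) with hDxh
  have hθc : Continuous θ := hθ.continuous
  have hhc : Continuous h := hh.continuous
  have hθd : Differentiable ℝ θ := hθ.differentiable (by simp)
  have hhd : Differentiable ℝ h := hh.differentiable (by simp)
  have hDtc : Continuous Dt := (hθ.continuous_fderiv (by simp)).clm_apply continuous_const
  have hDxc : Continuous Dx := (hθ.continuous_fderiv (by simp)).clm_apply continuous_const
  have hDxhc : Continuous Dxh := (hh.continuous_fderiv (by simp)).clm_apply continuous_const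
  have hne : ∀ p : ℝ × ℝ, θ p ≠ 0 := fun p => (hθpos p).ne'
  have hDt_d : ∀ s x : ℝ, HasDerivAt (fun s => θ (s, x)) (Dt (s, x)) s := by
    intro s x
    have h1 : HasDerivAt (fun s : ℝ => (s, x)) ((1:ℝ), (0:ℝ)) s :=
      (hasDerivAt_id s).prodMk (hasDerivAt_const s x)
    exact (hθd (s, x)).hasFDerivAt.comp_hasDerivAt s h1
  have hDx_d : ∀ s x : ℝ, HasDerivAt (fun y => θ (s, y)) (Dx (s, x)) x := by
    intro s x
    have h1 : HasDerivAt (fun y : ℝ => (s, y)) ((0:ℝ), (1:ℝ)) x :=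
      (hasDerivAt_const x s).prodMk (hasDerivAt_id x)
    exact (hθd (s, x)).hasFDerivAt.comp_hasDerivAt x h1
  have hDxh_d : ∀ s x : ℝ, HasDerivAt (fun y => h (s, y)) (Dxh (s, x)) x := by
    intro s x
    have h1 : HasDerivAt (fun y : ℝ => (s, y)) ((0:ℝ), (1:ℝ)) x :=
      (hasDerivAt_const x s).prodMk (hasDerivAt_id x)
    exact (hhd (s, x)).hasFDerivAt.comp_hasDerivAt x h1
  have hP_d : ∀ x : ℝ, HasDerivAt (fun y => θ (t, y) * h (t, y))
      (Dx (t, x) * h (t, x) + θ (t, x) * Dxh (t, x)) x :=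
    fun x => (hDx_d t x).mul (hDxh_d t x)
  have hpde' : ∀ x : ℝ, Dt (t, x) = -(Dx (t, x) * h (t, x) + θ (t, x) * Dxh (t, x)) := by
    intro x
    have h0 := hpde t x
    rw [(hDt_d t x).deriv, (hP_d x).deriv] at h0
    linarith
  -- step 1: differentiation under the integral sign
  have hΨc : Continuous fun p : ℝ × ℝ => Dt p * (Real.log (θ p) + 1) :=
    hDtc.mul ((hθc.log hne).add continuous_const)
  have hmk : ∀ s : ℝ, Continuous fun x : ℝ => (s, x) :=
    fun s => continuous_const.prodMk continuous_id
  have hΦd : ∀ (s x : ℝ), HasDerivAt (fun s => θ (s, x) * Real.log (θ (s, x)))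
      (Dt (s, x) * (Real.log (θ (s, x)) + 1)) s := by
    intro s x
    have h1 := hDt_d s x
    have h2 : HasDerivAt (fun s => Real.log (θ (s, x))) ((θ (s, x))⁻¹ * Dt (s, x)) s :=
      by have := (Real.hasDerivAt_log (hne (s, x))).comp s h1; exact this
    have h3 := h1.mul h2
    have h4 : θ (s, x) * ((θ (s, x))⁻¹ * Dt (s, x)) = Dt (s, x) := by
      rw [← mul_assoc, mul_inv_cancel₀ (hne (s, x)), one_mul]
    refine h3.congr_deriv ?_
    rw [h4]
    ring
  obtain ⟨C, hC⟩ := ((isCompact_closedBall t 1).prod (isCompact_Icc (a := (0:ℝ))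
      (b := 2 * Real.pi))).exists_bound_of_continuousOn hΨc.continuousOn
  have main := intervalIntegral.hasDerivAt_integral_of_dominated_loc_of_deriv_le
    (F := fun s x => θ (s, x) * Real.log (θ (s, x)))
    (F' := fun s x => Dt (s, x) * (Real.log (θ (s, x)) + 1))
    (a := 0) (b := 2 * Real.pi) (x₀ := t) (bound := fun _ => C) (s := Metric.ball t 1) (μ := MeasureTheory.volume) (Metric.ball_mem_nhds t one_pos)
    (Filter.Eventually.of_forall fun s =>
      ((hθc.comp (hmk s)).mul ((hθc.comp (hmk s)).log
        (fun x => hne (s, x)))).aestronglyMeasurable)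
    (Continuous.intervalIntegrable
      ((hθc.comp (hmk t)).mul ((hθc.comp (hmk t)).log (fun x => hne (t, x)))) _ _)
    (((hDtc.comp (hmk t)).mul (((hθc.comp (hmk t)).log (fun x => hne (t, x))).add
      continuous_const)).aestronglyMeasurable)
    (Filter.Eventually.of_forall fun x hx s hs => by
      refine hC (s, x) ⟨Metric.ball_subset_closedBall hs, ?_⟩
      rw [Set.uIoc_of_le hπ.le] at hx
      exact Set.Ioc_subset_Icc_self hx)
    (intervalIntegrable_const)
    (Filter.Eventually.of_forall fun x hx s hs => hΦd s x)
  have hE : HasDerivAt (fun s => ∫ x in (0:ℝ)..(2 * Real.pi), θ (s, x) * Real.log (θ (s, x)))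
      (∫ x in (0:ℝ)..(2 * Real.pi), Dt (t, x) * (Real.log (θ (t, x)) + 1)) t := main.2
  -- continuity in x of various slices
  have c1 : Continuous fun x : ℝ => Dx (t, x) := hDxc.comp (hmk t)
  have c2 : Continuous fun x : ℝ => Dxh (t, x) := hDxhc.comp (hmk t)
  have c3 : Continuous fun x : ℝ => θ (t, x) := hθc.comp (hmk t)
  have c4 : Continuous fun x : ℝ => h (t, x) := hhc.comp (hmk t)
  have hLc : Continuous fun x : ℝ => Real.log (θ (t, x)) + 1 :=
    (c3.log fun x => hne (t, x)).add continuous_const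
  -- step 2 : integration by parts
  have hQ : ∀ x : ℝ, HasDerivAt (fun y => θ (t, y) * h (t, y) * (Real.log (θ (t, y)) + 1))
      ((Dx (t, x) * h (t, x) + θ (t, x) * Dxh (t, x)) * (Real.log (θ (t, x)) + 1)
        + h (t, x) * Dx (t, x)) x := by
    intro x
    have h1 := hP_d x
    have h2 : HasDerivAt (fun y => Real.log (θ (t, y)) + 1) ((θ (t, x))⁻¹ * Dx (t, x)) x :=
      by have := ((Real.hasDerivAt_log (hne (t, x))).comp x (hDx_d t x)).add_const 1; exact this
    have h3 := h1.mul h2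
    have h4 : θ (t, x) * h (t, x) * ((θ (t, x))⁻¹ * Dx (t, x)) = h (t, x) * Dx (t, x) := by
      rw [mul_comm (θ (t, x)) (h (t, x)), mul_assoc, ← mul_assoc (θ (t, x)),
        mul_inv_cancel₀ (hne (t, x)), one_mul]
    refine h3.congr_deriv ?_
    rw [h4]
  have hQc : Continuous fun x : ℝ =>
      (Dx (t, x) * h (t, x) + θ (t, x) * Dxh (t, x)) * (Real.log (θ (t, x)) + 1)
        + h (t, x) * Dx (t, x) :=
    (((c1.mul c4).add (c3.mul c2)).mul hLc).add (c4.mul c1)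
  have hQint : (∫ x in (0:ℝ)..(2 * Real.pi),
      ((Dx (t, x) * h (t, x) + θ (t, x) * Dxh (t, x)) * (Real.log (θ (t, x)) + 1)
        + h (t, x) * Dx (t, x)))
      = θ (t, 2 * Real.pi) * h (t, 2 * Real.pi) * (Real.log (θ (t, 2 * Real.pi)) + 1)
        - θ (t, 0) * h (t, 0) * (Real.log (θ (t, 0)) + 1) :=
    intervalIntegral.integral_eq_sub_of_hasDerivAt (fun x _ => hQ x)
      (hQc.intervalIntegrable _ _)
  have hbdry : θ (t, 2 * Real.pi) * h (t, 2 * Real.pi) * (Real.log (θ (t, 2 * Real.pi)) + 1)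
      - θ (t, 0) * h (t, 0) * (Real.log (θ (t, 0)) + 1) = 0 := by
    have e1 : θ (t, 2 * Real.pi) = θ (t, 0) := by simpa using hθper t 0
    have e2 : h (t, 2 * Real.pi) = h (t, 0) := by simpa using (hhilb t).2.1 0
    rw [e1, e2, sub_self]
  have hval : (∫ x in (0:ℝ)..(2 * Real.pi), Dt (t, x) * (Real.log (θ (t, x)) + 1))
      = ∫ x in (0:ℝ)..(2 * Real.pi), h (t, x) * Dx (t, x) := by
    have heq : Set.EqOn (fun x => Dt (t, x) * (Real.log (θ (t, x)) + 1))
        (fun x => h (t, x) * Dx (t, x)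
          - ((Dx (t, x) * h (t, x) + θ (t, x) * Dxh (t, x)) * (Real.log (θ (t, x)) + 1)
            + h (t, x) * Dx (t, x)))
        (Set.uIcc (0:ℝ) (2 * Real.pi)) := by
      intro x _
      simp only
      rw [hpde' x]
      ring
    rw [intervalIntegral.integral_congr heq,
      intervalIntegral.integral_sub ((show Continuous (fun x => h (t, x) * Dx (t, x)) from c4.mul c1).intervalIntegrable _ _)
        (hQc.intervalIntegrable _ _),
      hQint, hbdry, sub_zero]
  -- step 3 : Fourier analysis
  have hu_per : Function.Periodic (fun x => θ (t, x)) (2 * Real.pi) := fun x => hθper t x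
  have hv_per : Function.Periodic (fun x => h (t, x)) (2 * Real.pi) := (hhilb t).2.1
  have hw_d : ∀ x : ℝ, HasDerivAt (fun x => θ (t, x)) (Dx (t, x)) x := fun x => hDx_d t x
  have hw_per : Function.Periodic (fun x => Dx (t, x)) (2 * Real.pi) := by
    intro x
    have h1 : HasDerivAt (fun y => θ (t, y + 2 * Real.pi)) (Dx (t, x + 2 * Real.pi)) x := by
      exact
        ((hw_d (x + 2 * Real.pi)).comp x ((hasDerivAt_id x).add_const (2 * Real.pi))).congr_deriv (mul_one _)
    have h2 : (fun y => θ (t, y + 2 * Real.pi)) = fun y => θ (t, y) :=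
      funext fun y => hθper t y
    rw [h2] at h1
    exact h1.unique (hw_d x)
  have hvcper : Function.Periodic (fun x => ((h (t, x) : ℝ) : ℂ)) (2 * Real.pi) := fun x => by
    simp only [hv_per x]
  have hwcper : Function.Periodic (fun x => ((Dx (t, x) : ℝ) : ℂ)) (2 * Real.pi) := fun x => by
    simp only [hw_per x]
  have hvcC : Continuous fun x : ℝ => ((h (t, x) : ℝ) : ℂ) := Complex.continuous_ofReal.comp c4
  have hwcC : Continuous fun x : ℝ => ((Dx (t, x) : ℝ) : ℂ) := Complex.continuous_ofReal.comp c1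
  let Fc : C(AddCircle (2 * Real.pi), ℂ) := ⟨hvcper.lift, lift_continuous hvcC hvcper⟩
  let Gc : C(AddCircle (2 * Real.pi), ℂ) := ⟨hwcper.lift, lift_continuous hwcC hwcper⟩
  have hpars := parseval Fc Gc
  have hFk : ∀ k : ℤ, fourierCoeff (⇑Fc) k = fourierCoef (fun x => h (t, x)) k := fun k =>
    fourierCoeff_lift_real (fun x => h (t, x)) hvcper k
  have hGk : ∀ k : ℤ, fourierCoeff (⇑Gc) k = fourierCoef (fun x => Dx (t, x)) k := fun k =>
    fourierCoeff_lift_real (fun x => Dx (t, x)) hwcper k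
  have hR : (∫ z, (starRingEnd ℂ) (Fc z) * Gc z ∂AddCircle.haarAddCircle)
      = ((1 / (2 * Real.pi) : ℝ) : ℂ)
        * ((∫ x in (0:ℝ)..(2 * Real.pi), h (t, x) * Dx (t, x) : ℝ) : ℂ) := by
    rw [integral_haar (fun z => (starRingEnd ℂ) (Fc z) * Gc z)]
    congr 1
    rw [← intervalIntegral.integral_ofReal]
    refine intervalIntegral.integral_congr fun x _ => ?_
    show (starRingEnd ℂ) (Fc ↑x) * Gc ↑x = ((h (t, x) * Dx (t, x) : ℝ) : ℂ)
    have e1 : (Fc ↑x : ℂ) = ((h (t, x) : ℝ) : ℂ) := Function.Periodic.lift_coe hvcper x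
    have e2 : (Gc ↑x : ℂ) = ((Dx (t, x) : ℝ) : ℂ) := Function.Periodic.lift_coe hwcper x
    rw [e1, e2, Complex.conj_ofReal]
    push_cast
    ring
  have hw_coef : ∀ k : ℤ, fourierCoef (fun x => Dx (t, x)) k
      = Complex.I * k * fourierCoef (fun x => θ (t, x)) k :=
    fourierCoef_deriv (fun x => θ (t, x)) (fun x => Dx (t, x)) hw_d c1 hu_per
  have hterm : ∀ k : ℤ, (starRingEnd ℂ) (fourierCoef (fun x => h (t, x)) k)
        * fourierCoef (fun x => Dx (t, x)) k
      = ((-( |(k : ℝ)| * ‖fourierCoef (fun x => θ (t, x)) k‖ ^ 2) : ℝ) : ℂ) := by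
    intro k
    rw [(hhilb t).2.2 k, hw_coef k]
    rw [map_mul, map_mul, map_neg, Complex.conj_I, map_intCast]
    have hsign : ((Int.sign k : ℂ)) * (k : ℂ) = ((|k| : ℤ) : ℂ) := by
      exact_mod_cast congrArg (fun n : ℤ => (n : ℂ)) (EntropyAux.sign_mul_self k)
    have hcc : (starRingEnd ℂ) (fourierCoef (fun x => θ (t, x)) k)
        * fourierCoef (fun x => θ (t, x)) k
        = ((‖fourierCoef (fun x => θ (t, x)) k‖ ^ 2 : ℝ) : ℂ) := by
      rw [mul_comm, Complex.mul_conj, Complex.normSq_eq_norm_sq]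
    calc - -Complex.I * (Int.sign k : ℂ) * (starRingEnd ℂ) (fourierCoef (fun x => θ (t, x)) k)
          * (Complex.I * k * fourierCoef (fun x => θ (t, x)) k)
        = (Complex.I * Complex.I) * (((Int.sign k : ℂ)) * k)
          * ((starRingEnd ℂ) (fourierCoef (fun x => θ (t, x)) k)
            * fourierCoef (fun x => θ (t, x)) k) := by ring
      _ = -(((|k| : ℤ) : ℂ) * ((‖fourierCoef (fun x => θ (t, x)) k‖ ^ 2 : ℝ) : ℂ)) := by
          rw [Complex.I_mul_I, hsign, hcc]; ring
      _ = ((-( |(k : ℝ)| * ‖fourierCoef (fun x => θ (t, x)) k‖ ^ 2) : ℝ) : ℂ) := by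
          have : ((|k| : ℤ) : ℂ) = ((|(k : ℝ)| : ℝ) : ℂ) := by norm_cast
          rw [this]
          push_cast
          ring
  have htsum : (∑' k : ℤ, (starRingEnd ℂ) (fourierCoeff (⇑Fc) k) * fourierCoeff (⇑Gc) k)
      = ((-(∑' k : ℤ, |(k : ℝ)| * ‖fourierCoef (fun x => θ (t, x)) k‖ ^ 2) : ℝ) : ℂ) := by
    rw [show (∑' k : ℤ, (starRingEnd ℂ) (fourierCoeff (⇑Fc) k) * fourierCoeff (⇑Gc) k)
        = ∑' k : ℤ, ((-( |(k : ℝ)| * ‖fourierCoef (fun x => θ (t, x)) k‖ ^ 2) : ℝ) : ℂ) from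
      tsum_congr fun k => by rw [hFk k, hGk k, hterm k]]
    rw [← Complex.ofReal_tsum, tsum_neg]
  have hfinal : (∫ x in (0:ℝ)..(2 * Real.pi), h (t, x) * Dx (t, x))
      = -(2 * Real.pi) * ∑' k : ℤ, |(k : ℝ)| * ‖fourierCoef (fun x => θ (t, x)) k‖ ^ 2 := by
    have h2 := hpars
    rw [htsum, hR] at h2
    have h4 : -(∑' k : ℤ, |(k : ℝ)| * ‖fourierCoef (fun x => θ (t, x)) k‖ ^ 2)
        = (1 / (2 * Real.pi)) * ∫ x in (0:ℝ)..(2 * Real.pi), h (t, x) * Dx (t, x) := by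
      exact_mod_cast h2
    have h5 := congrArg (fun z => (2 * Real.pi) * z) h4
    rw [← mul_assoc, mul_one_div, div_self (ne_of_gt hπ), one_mul] at h5
    rw [← h5]
    ring
  rw [hval, hfinal] at hE
  refine ⟨hE, ?_⟩
  have hS : 0 ≤ ∑' k : ℤ, |(k : ℝ)| * ‖fourierCoef (fun x => θ (t, x)) k‖ ^ 2 :=
    tsum_nonneg fun k => by positivity
  rw [neg_mul]
  exact neg_nonpos.mpr (mul_nonneg hπ.le hS)
end
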